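/- Let G be a connected chordal claw-free graph with clique tree T_G, rooted at a leaf R of T_G. Let A and B be max cliques of G such that A is not a descendant of B and B is not a descendant of A in the rooted tree T_G^R. If A ∩ B ≠ ∅, then A and B are the two children of a fork clique, i.e., A and B have a common parent P in T_G^R and P is a fork clique. -/

import Mathlib

open SimpleGraph

/-- A graph is *chordal* if every cycle of length at least 4 has a chord, i.e. an
edge of the graph joining two vertices of the cycle that is not an edge of the cycle. -/
def IsChordal {V : Type*} (G : SimpleGraph V) : Prop :=
  ∀ (v : V) (c : G.Walk v v), c.IsCycle → 4 ≤ c.length →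
    ∃ u w : V, u ∈ c.support ∧ w ∈ c.support ∧ G.Adj u w ∧ s(u, w) ∉ c.edges

/-- A graph is *claw-free* if it has no induced subgraph isomorphic to the
complete bipartite graph `K_{1,3}`. -/
def ClawFree {V : Type*} (G : SimpleGraph V) : Prop :=
  IsEmpty (completeBipartiteGraph (Fin 1) (Fin 3) ↪g G)

/-- A *max clique* of `G` is a maximal clique. -/
def IsMaximalClique {V : Type*} (G : SimpleGraph V) (s : Set V) : Prop :=
  G.IsClique s ∧ ∀ t : Set V, G.IsClique t → s ⊆ t → s = t

/-- The type of max cliques of `G`. -/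
abbrev MaxClique {V : Type*} (G : SimpleGraph V) : Type _ :=
  {s : Set V // IsMaximalClique G s}

/-- `M_v`: the set of max cliques of `G` containing the vertex `v`. -/
def cliquesOf {V : Type*} (G : SimpleGraph V) (v : V) : Set (MaxClique G) :=
  {A | v ∈ A.1}

/-- A *clique tree* of `G`: a tree whose vertices are the max cliques of `G` such
that for every vertex `v` of `G` the subgraph induced by `M_v` is connected. -/
structure IsCliqueTree {V : Type*} (G : SimpleGraph V)
    (T : SimpleGraph (MaxClique G)) : Prop where
  isTree : T.IsTree
  induced_connected : ∀ v : V, (T.induce (cliquesOf G v)).Connected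

/-- The subgraph of `T` induced by `S` is a path in `T`: there is a path of `T`
whose vertices are exactly `S` and whose edges are exactly the edges of `T`
between vertices of `S`. -/
def InducedPath {M : Type*} (T : SimpleGraph M) (S : Set M) : Prop :=
  ∃ (a b : M) (p : T.Walk a b), p.IsPath ∧ (∀ A, A ∈ p.support ↔ A ∈ S) ∧
    ∀ A B, A ∈ S → B ∈ S → (T.Adj A B ↔ s(A, B) ∈ p.edges)

/-- `B` is a *star clique*: every vertex of `B` is contained in at most one
neighbor of `B` in the clique tree `T`. -/
def IsStarClique {V : Type*} (G : SimpleGraph V) (T : SimpleGraph (MaxClique G))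
    (B : MaxClique G) : Prop :=
  ∀ v ∈ B.1, ∀ A A' : MaxClique G, T.Adj B A → T.Adj B A' →
    v ∈ A.1 → v ∈ A'.1 → A = A'

/-- `B` is a *fork clique*: `B` has degree 3 in the clique tree `T`, for every
vertex `v ∈ B` there are two distinct neighbors `A, A'` of `B` with
`M_v = {B, A, A'}`, and for all distinct neighbors `A, A'` of `B` there is a
vertex `v` with `M_v = {B, A, A'}`. -/
def IsForkClique {V : Type*} (G : SimpleGraph V) (T : SimpleGraph (MaxClique G))
    (B : MaxClique G) : Prop :=
  (T.neighborSet B).ncard = 3 ∧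
  (∀ v ∈ B.1, ∃ A A' : MaxClique G, A ≠ A' ∧ T.Adj B A ∧ T.Adj B A' ∧
      cliquesOf G v = {B, A, A'}) ∧
  ∀ A A' : MaxClique G, T.Adj B A → T.Adj B A' → A ≠ A' →
      ∃ v : V, cliquesOf G v = {B, A, A'}

/-- The paths `T[S₁]` and `T[S₂]` *fork in `A`*: there is a fork
`(A', A, {A_P, A_Q})`, i.e. `A', A, A_P` are consecutive vertices of the path
`T[S₁]`, `A', A, A_Q` are consecutive vertices of the path `T[S₂]`,
`A_P` does not occur in `T[S₂]` and `A_Q` does not occur in `T[S₁]`. -/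
def ForkAt {M : Type*} (T : SimpleGraph M) (S₁ S₂ : Set M) (A : M) : Prop :=
  ∃ A' AP AQ : M, A' ∈ S₁ ∧ A' ∈ S₂ ∧ A ∈ S₁ ∧ A ∈ S₂ ∧ AP ∈ S₁ ∧ AQ ∈ S₂ ∧
    T.Adj A' A ∧ T.Adj A AP ∧ T.Adj A AQ ∧ A' ≠ AP ∧ A' ≠ AQ ∧ AP ∉ S₂ ∧ AQ ∉ S₁

/-- `A₁, A₂, A₃` form a *fork triangle* around `B`. -/
def FormsForkTriangle {V : Type*} (G : SimpleGraph V) (T : SimpleGraph (MaxClique G))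
    (A₁ A₂ A₃ B : MaxClique G) : Prop :=
  A₁ ≠ A₂ ∧ A₁ ≠ A₃ ∧ A₂ ≠ A₃ ∧ T.Adj B A₁ ∧ T.Adj B A₂ ∧ T.Adj B A₃ ∧
  (∃ u : V, cliquesOf G u = {A₁, B, A₂}) ∧
  (∃ v : V, cliquesOf G v = {A₂, B, A₃}) ∧
  (∃ w : V, cliquesOf G w = {A₃, B, A₁})

/-- `B` has a fork triangle. -/
def HasForkTriangle {V : Type*} (G : SimpleGraph V) (T : SimpleGraph (MaxClique G))
    (B : MaxClique G) : Prop :=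
  ∃ A₁ A₂ A₃ : MaxClique G, FormsForkTriangle G T A₁ A₂ A₃ B

/-- In the tree `T` rooted at `R`, `B` is an ancestor of `A` (equivalently, `A` is
a descendant of `B`): `B` lies on the unique path from `R` to `A`.  Every vertex
is an ancestor/descendant of itself. -/
def IsAncestor {M : Type*} (T : SimpleGraph M) (R A B : M) : Prop :=
  ∀ p : T.Walk R A, p.IsPath → B ∈ p.support

/-- In the tree `T` rooted at `R`, `A` is a child of `P`. -/
def IsChildOf {M : Type*} (T : SimpleGraph M) (R A P : M) : Prop :=
  T.Adj P A ∧ IsAncestor T R A P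

/-- `R` is a leaf of `T`: it has exactly one neighbor. -/
def IsLeaf {M : Type*} (T : SimpleGraph M) (R : M) : Prop :=
  (T.neighborSet R).ncard = 1

/-- The triple `(v₁, v₂, v₃)` *spans* the max clique `A`: `A` is the only max
clique of `G` containing `v₁`, `v₂` and `v₃`. -/
def Spans {V : Type*} (G : SimpleGraph V) (v₁ v₂ v₃ : V) (A : Set V) : Prop :=
  IsMaximalClique G A ∧ v₁ ∈ A ∧ v₂ ∈ A ∧ v₃ ∈ A ∧
    ∀ B : Set V, IsMaximalClique G B → v₁ ∈ B → v₂ ∈ B → v₃ ∈ B → B = A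

/-!
Fix `v ∈ A ∩ B`. The max cliques containing `v` form a subtree `M_v` of the clique tree, and
claw-freeness forbids `M_v` to contain a path `X₀ X₁ X₂ X₃` whose vertex `X₂` has a further
neighbour in the tree. So if the tree path from `A` to `B`, which lies in `M_v`, had length at least
three, all its inner vertices would have degree two; the path would then climb from `A` all the way
to `B`, making `B` an ancestor of `A`. Hence the path is `A P B` with `P` the parent of both. The
parent of `P` is a third neighbour, and further claw arguments around `P` show that there is no
fourth one, that every vertex of `P` lies in exactly two neighbours of `P`, and that any two
neighbours share a vertex.
-/

namespace SimpleGraph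

variable {M : Type*} {T : SimpleGraph M} {R W X Y Z : M}

def Between (T : SimpleGraph M) (X Z Y : M) : Prop :=
  ∀ w : T.Walk X Y, Z ∈ w.support

lemma between_left (X Y : M) : T.Between X X Y := fun w => w.start_mem_support

lemma between_right (X Y : M) : T.Between X Y Y := fun w => w.end_mem_support

lemma Between.symm (h : T.Between X Z Y) : T.Between Y Z X := fun w => by
  simpa using h w.reverse

lemma Between.trans (hXY : T.Between R X Y) (hYZ : T.Between R Y Z) : T.Between R X Z := by
  classical
  exact fun w => w.support_takeUntil_subset_support (hYZ w) (hXY (w.takeUntil Y (hYZ w)))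

lemma Between.between_or_between (h : T.Between X Z Y) (R : M) :
    T.Between R Z X ∨ T.Between R Z Y := by
  by_contra! ⟨hX, hY⟩
  obtain ⟨w₁, h₁⟩ : ∃ w : T.Walk R X, Z ∉ w.support := by simpa [Between] using hX
  obtain ⟨w₂, h₂⟩ : ∃ w : T.Walk R Y, Z ∉ w.support := by simpa [Between] using hY
  simpa [h₁, h₂] using h (w₁.reverse.append w₂)

lemma isAncestor_iff_between : IsAncestor T R X Y ↔ T.Between R Y X := by
  classical
  exact ⟨fun h w => w.support_bypass_subset_support (h _ w.bypass_isPath), fun h w _ => h w⟩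

lemma IsAcyclic.between_of_mem_support (hT : T.IsAcyclic) {p : T.Walk X Y} (hp : p.IsPath)
    (hZ : Z ∈ p.support) : T.Between X Z Y := by
  classical
  intro w
  have : w.bypass = p := congrArg Subtype.val
    ((hT.subsingleton_path X Y).elim ⟨_, w.bypass_isPath⟩ ⟨p, hp⟩)
  exact w.support_bypass_subset_support (this ▸ hZ)

lemma IsAcyclic.between_of_adj_of_adj (hT : T.IsAcyclic) (hX : T.Adj Z X) (hY : T.Adj Z Y)
    (hXY : X ≠ Y) : T.Between X Z Y :=
  hT.between_of_mem_support (p := .cons hX.symm (.cons hY .nil))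
    (by simp [hX.ne', hY.ne, hXY]) (by simp)

lemma IsAcyclic.between_of_adj_of_adj_of_adj (hT : T.IsAcyclic) (h₁ : T.Adj W X)
    (h₂ : T.Adj X Y) (h₃ : T.Adj Y Z) (hWY : W ≠ Y) (hWZ : W ≠ Z) (hXZ : X ≠ Z) :
    T.Between W Y Z :=
  hT.between_of_mem_support (p := .cons h₁ (.cons h₂ (.cons h₃ .nil)))
    (by simp [h₁.ne, h₂.ne, h₃.ne, hWY, hWZ, hXZ]) (by simp)

lemma IsAcyclic.not_adj_of_adj_of_adj (hT : T.IsAcyclic) (hX : T.Adj Z X) (hY : T.Adj Z Y)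
    (hXY : X ≠ Y) : ¬ T.Adj X Y := fun h => by
  simpa [hX.ne, hY.ne] using hT.between_of_adj_of_adj hX hY hXY (.cons h .nil)

lemma IsTree.eq_of_between_of_between (hT : T.IsTree) (hXY : T.Between R X Y)
    (hYX : T.Between R Y X) : X = Y := by
  classical
  obtain ⟨p, hp⟩ := (hT.connected R Y).exists_isPath
  have hX := hXY p
  rw [← p.take_spec hX] at hp
  by_contra hne
  exact hp.ne_of_mem_support_of_append (Ne.symm hne) (hYX _) (p.dropUntil X hX).end_mem_support rfl

lemma IsTree.between_or_between_of_adj (hT : T.IsTree) (hXY : T.Adj X Y) (W : M) :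
    T.Between W X Y ∨ T.Between W Y X := by
  obtain ⟨p, hp⟩ := (hT.connected W X).exists_isPath
  obtain ⟨q, hq⟩ := (hT.connected W Y).exists_isPath
  by_cases hX : X ∈ q.support
  · exact .inl (hT.isAcyclic.between_of_mem_support hq hX)
  · exact .inr (hT.isAcyclic.between_of_mem_support hp
      (hT.isAcyclic.mem_support_of_ne_mem_support_of_adj_of_isPath hp hq hXY hX))

lemma IsTree.exists_adj_between (hT : T.IsTree) (hXR : X ≠ R) :
    ∃ P, T.Adj P X ∧ T.Between R P X := by
  obtain ⟨p, hp⟩ := (hT.connected X R).exists_isPath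
  have hnil : ¬ p.Nil := Walk.not_nil_of_ne hXR
  exact ⟨p.snd, (p.adj_snd hnil).symm,
    (hT.isAcyclic.between_of_mem_support hp (p.getVert_mem_support 1)).symm⟩

lemma IsTree.between_of_adj_of_between (hT : T.IsTree) (hXZ : T.Adj X Z) (hZ : T.Between X Z Y)
    (hXY : ¬ T.Between R X Y) : T.Between R Z X := by
  refine (hT.between_or_between_of_adj hXZ R).resolve_left fun h => ?_
  rcases hZ.between_or_between R with h' | h'
  · exact hXZ.ne (hT.eq_of_between_of_between h h')
  · exact hXY (h.trans h')

lemma _root_.IsLeaf.ne_of_adj_of_adj (hR : IsLeaf T R)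
    (hX : T.Adj Z X) (hY : T.Adj Z Y) (hXY : X ≠ Y) : Z ≠ R := by
  rintro rfl
  obtain ⟨A, hA⟩ := Set.ncard_eq_one.1 hR
  have hX' : X ∈ T.neighborSet Z := hX
  have hY' : Y ∈ T.neighborSet Z := hY
  rw [hA] at hX' hY'
  exact hXY (hX'.trans hY'.symm)

lemma IsTree.between_of_forall_adj (hT : T.IsTree) (hZR : Z ≠ R) (hZX : T.Adj Z X)
    (hnb : ∀ C, T.Adj Z C → C = X ∨ C = Y) (h : T.Between R Z X) : T.Between R Y Z := by
  obtain ⟨P, hPZ, hRPZ⟩ := hT.exists_adj_between hZR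
  rcases hnb P hPZ.symm with rfl | rfl
  · exact absurd (hT.eq_of_between_of_between h hRPZ) hZX.ne
  · exact hRPZ

/-- If the inner vertices of a path have no neighbours off the path and its first step goes
towards the root, then the whole path climbs towards the root. -/
lemma IsTree.between_of_isPath (hT : T.IsTree) (hR : IsLeaf T R) {p : T.Walk X Y}
    (hp : p.IsPath) (hnb : ∀ j, j + 1 < p.length → ∀ C, T.Adj (p.getVert (j + 1)) C →
      C = p.getVert j ∨ C = p.getVert (j + 2))
    (h₁ : T.Between R (p.getVert 1) X) : T.Between R Y X := by
  have up : ∀ j, j < p.length → T.Between R (p.getVert (j + 1)) (p.getVert j) := by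
    intro j
    induction j with
    | zero => simpa using fun _ => h₁
    | succ j ih =>
      intro hj
      have hadj := p.adj_getVert_succ (i := j) (by omega)
      have hne : p.getVert j ≠ p.getVert (j + 2) := fun h => by
        have := hp.getVert_injOn (by simp; omega) (by simp; omega) h
        omega
      exact hT.between_of_forall_adj
        (hR.ne_of_adj_of_adj hadj.symm (p.adj_getVert_succ hj) hne) hadj.symm
        (hnb j hj) (ih (by omega))
  have climb : ∀ j, j ≤ p.length → T.Between R (p.getVert j) X := by
    intro j
    induction j with
    | zero => simpa using between_right (T := T) R X
    | succ j ih => exact fun hj => (up j (by omega)).trans (ih (by omega))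
  simpa using climb p.length le_rfl

end SimpleGraph

section MaxClique

variable {V : Type*} {G : SimpleGraph V}

lemma MaxClique.exists_mem_not_mem_of_ne {A B : MaxClique G} (h : A ≠ B) :
    ∃ x ∈ A.1, x ∉ B.1 := by
  by_contra! hAB
  exact h (Subtype.ext (A.2.2 B.1 B.2.1 hAB))

lemma exists_maxClique_superset {s : Set V} (hs : G.IsClique s) : ∃ A : MaxClique G, s ⊆ A.1 := by
  obtain ⟨m, hsm, hm⟩ := zorn_subset_nonempty {t | G.IsClique t}
    (fun c hc hchain _ => ⟨⋃₀ c, (isClique_sUnion hchain.directedOn).2 hc,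
      fun _ => Set.subset_sUnion_of_mem⟩) s hs
  exact ⟨⟨m, hm.1, fun t ht hmt => hmt.antisymm (hm.2 ht hmt)⟩, hsm⟩

lemma MaxClique.nonempty [Nonempty V] (A : MaxClique G) : A.1.Nonempty := by
  obtain ⟨v⟩ := ‹Nonempty V›
  rw [Set.nonempty_iff_ne_empty]
  intro h
  simpa [h] using A.2.2 {v} (G.isClique_singleton v) (by simp [h])

lemma cliquesOf_inter_nonempty_of_adj {x y : V} (h : G.Adj x y) :
    (cliquesOf G x ∩ cliquesOf G y).Nonempty := by
  obtain ⟨A, hA⟩ := exists_maxClique_superset (G.isClique_pair.2 fun _ => h)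
  exact ⟨A, hA (Set.mem_insert x _), hA (Set.mem_insert_of_mem x rfl)⟩

lemma ne_and_not_adj_of_disjoint_cliquesOf {x y : V}
    (h : Disjoint (cliquesOf G x) (cliquesOf G y)) : x ≠ y ∧ ¬ G.Adj x y := by
  refine ⟨?_, fun hxy => (cliquesOf_inter_nonempty_of_adj hxy).ne_empty h.inter_eq⟩
  rintro rfl
  obtain ⟨A, hA⟩ := exists_maxClique_superset (G.isClique_singleton x)
  exact Set.disjoint_left.1 h (hA rfl) (hA rfl)

lemma ClawFree.false_of_adj (hcf : ClawFree G) {c x y z : V}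
    (hx : G.Adj c x) (hy : G.Adj c y) (hz : G.Adj c z) (hxy : x ≠ y ∧ ¬ G.Adj x y)
    (hxz : x ≠ z ∧ ¬ G.Adj x z) (hyz : y ≠ z ∧ ¬ G.Adj y z) : False := by
  set w : Fin 3 → V := ![x, y, z]
  have hc : ∀ i, G.Adj c (w i) := by
    intro i; fin_cases i <;> assumption
  have hw : ∀ i j, i ≠ j → w i ≠ w j ∧ ¬ G.Adj (w i) (w j) := by
    intro i j hij
    fin_cases i <;> fin_cases j <;> simp_all [w, eq_comm, G.adj_comm]
  let f : Fin 1 ⊕ Fin 3 → V := Sum.elim (fun _ => c) w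
  have hf : Function.Injective f := by
    rintro (i | i) (j | j) h
    · exact congrArg Sum.inl (Subsingleton.elim i j)
    · exact absurd h (hc j).ne
    · exact absurd h.symm (hc i).ne
    · by_contra hij
      exact (hw i j fun h' => hij (congrArg Sum.inr h')).1 h
  refine hcf.elim ⟨⟨f, hf⟩, fun {a b} => ?_⟩
  change G.Adj (f a) (f b) ↔ _
  rcases a with i | i <;> rcases b with j | j
  · simp [f]
  · simpa [f] using hc j
  · simpa [f] using (hc i).symm
  · by_cases hij : i = j
    · subst hij; simp
    · simpa [f] using (hw i j hij).2

lemma adj_of_mem_of_not_mem {X : MaxClique G} {S : Set V} {c x : V} (hc : c ∈ X.1) (hx : x ∈ X.1)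
    (hcS : c ∈ S) (hxS : x ∉ S) : G.Adj c x :=
  X.2.1 hc hx (ne_of_mem_of_not_mem hcS hxS)

lemma ClawFree.false_of_disjoint_cliquesOf (hcf : ClawFree G) {c x y z : V}
    (hx : G.Adj c x) (hy : G.Adj c y) (hz : G.Adj c z)
    (hxy : Disjoint (cliquesOf G x) (cliquesOf G y))
    (hxz : Disjoint (cliquesOf G x) (cliquesOf G z))
    (hyz : Disjoint (cliquesOf G y) (cliquesOf G z)) : False :=
  hcf.false_of_adj hx hy hz (ne_and_not_adj_of_disjoint_cliquesOf hxy)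
    (ne_and_not_adj_of_disjoint_cliquesOf hxz) (ne_and_not_adj_of_disjoint_cliquesOf hyz)

end MaxClique

namespace IsCliqueTree

open SimpleGraph

variable {V : Type*} {G : SimpleGraph V} {T : SimpleGraph (MaxClique G)}
  (hT : IsCliqueTree G T) {u v x y : V} {A B C D P R W W' X Y Z : MaxClique G}
include hT

lemma exists_walk (hX : u ∈ X.1) (hY : u ∈ Y.1) :
    ∃ q : T.Walk X Y, ∀ W ∈ q.support, u ∈ W.1 := by
  obtain ⟨q⟩ := (hT.induced_connected u).preconnected ⟨X, hX⟩ ⟨Y, hY⟩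
  refine ⟨q.map (Embedding.induce _).toHom, fun W hW => ?_⟩
  replace hW : W ∈ (q.map (Embedding.induce _).toHom).support := hW
  rw [Walk.support_map, List.mem_map] at hW
  obtain ⟨⟨W, hW⟩, -, rfl⟩ := hW
  exact hW

lemma mem_of_between (h : T.Between X Z Y) (hX : u ∈ X.1) (hY : u ∈ Y.1) : u ∈ Z.1 := by
  obtain ⟨q, hq⟩ := hT.exists_walk hX hY
  exact hq Z (h q)

lemma mem_of_between_of_not_between (h : T.Between W X Y) (h' : ¬ T.Between W' X Y)
    (hW : u ∈ W.1) (hW' : u ∈ W'.1) : u ∈ X.1 := by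
  obtain ⟨r, hr⟩ : ∃ r : T.Walk W' Y, X ∉ r.support := by simpa [Between] using h'
  obtain ⟨q, hq⟩ := hT.exists_walk hW hW'
  exact hq X (((Walk.mem_support_append_iff _ _).1 (h (q.append r))).resolve_right hr)

lemma disjoint_cliquesOf_of_between (h : T.Between X Z Y) (hx : x ∈ X.1) (hxZ : x ∉ Z.1)
    (hy : y ∈ Y.1) (hyZ : y ∉ Z.1) : Disjoint (cliquesOf G x) (cliquesOf G y) := by
  refine Set.disjoint_left.2 fun W (hxW : x ∈ W.1) (hyW : y ∈ W.1) => ?_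
  obtain ⟨q, hq⟩ := hT.exists_walk hx hxW
  obtain ⟨r, hr⟩ := hT.exists_walk hyW hy
  rcases (Walk.mem_support_append_iff _ _).1 (h (q.append r)) with hZ | hZ
  exacts [hxZ (hq Z hZ), hyZ (hr Z hZ)]

lemma disjoint_cliquesOf_of_adj (hXY : T.Adj X Y) (hx : x ∈ X.1) (hxY : x ∉ Y.1)
    (hy : y ∈ Y.1) (hyX : y ∉ X.1) : Disjoint (cliquesOf G x) (cliquesOf G y) := by
  refine Set.disjoint_left.2 fun W (hxW : x ∈ W.1) (hyW : y ∈ W.1) => ?_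
  rcases hT.isTree.between_or_between_of_adj hXY W with h | h
  · exact hyX (hT.mem_of_between h hyW hy)
  · exact hxY (hT.mem_of_between h hxW hx)

lemma inter_nonempty_of_adj (hconn : G.Connected) (hXY : T.Adj X Y) :
    (X.1 ∩ Y.1).Nonempty := by
  have := hconn.nonempty
  by_contra hXY'
  let S : Set V := {u | ∃ W : MaxClique G, u ∈ W.1 ∧ T.Between W X Y}
  have hS : ∀ u u', G.Adj u u' → u ∈ S → u' ∈ S := by
    rintro u u' huu' ⟨W', huW', hW'⟩
    obtain ⟨W, huW, hu'W⟩ := cliquesOf_inter_nonempty_of_adj huu'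
    refine ⟨W, hu'W, by_contra fun hW => hXY' ⟨u, ?_, ?_⟩⟩
    · exact hT.mem_of_between_of_not_between hW' hW huW' huW
    · refine hT.mem_of_between_of_not_between
        ((hT.isTree.between_or_between_of_adj hXY W).resolve_left hW) (fun hW'' => ?_) huW huW'
      exact hXY.ne (hT.isTree.eq_of_between_of_between hW' hW'')
  have hwalk : ∀ {a b : V}, G.Walk a b → a ∈ S → b ∈ S := by
    intro a b p
    induction p with
    | nil => exact id
    | cons h _ ih => exact fun ha => ih (hS _ _ h ha)
  obtain ⟨x, hx⟩ := X.nonempty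
  obtain ⟨y, hy⟩ := Y.nonempty
  obtain ⟨W, hyW, hW⟩ := hwalk (hconn.preconnected x y).some ⟨X, hx, between_left X Y⟩
  exact hXY' ⟨y, hT.mem_of_between hW hyW hy, hy⟩

section ClawFree

variable (hcf : ClawFree G)
include hcf

lemma not_mem_of_adj_of_adj_of_adj (hXY : X ≠ Y) (hXZ : X ≠ Z) (hYZ : Y ≠ Z)
    (aX : T.Adj P X) (aY : T.Adj P Y) (aZ : T.Adj P Z) (hX : u ∈ X.1) (hY : u ∈ Y.1) :
    u ∉ Z.1 := by
  intro hZ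
  have hac := hT.isTree.isAcyclic
  have hP := hT.mem_of_between (hac.between_of_adj_of_adj aX aY hXY) hX hY
  obtain ⟨a, haX, haP⟩ := MaxClique.exists_mem_not_mem_of_ne aX.ne'
  obtain ⟨b, hbY, hbP⟩ := MaxClique.exists_mem_not_mem_of_ne aY.ne'
  obtain ⟨c, hcZ, hcP⟩ := MaxClique.exists_mem_not_mem_of_ne aZ.ne'
  exact hcf.false_of_disjoint_cliquesOf (adj_of_mem_of_not_mem hX haX hP haP)
    (adj_of_mem_of_not_mem hY hbY hP hbP) (adj_of_mem_of_not_mem hZ hcZ hP hcP)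
    (hT.disjoint_cliquesOf_of_between (hac.between_of_adj_of_adj aX aY hXY) haX haP hbY hbP)
    (hT.disjoint_cliquesOf_of_between (hac.between_of_adj_of_adj aX aZ hXZ) haX haP hcZ hcP)
    (hT.disjoint_cliquesOf_of_between (hac.between_of_adj_of_adj aY aZ hYZ) hbY hbP hcZ hcP)

section Path

variable {X₀ X₁ X₂ X₃ : MaxClique G} (a₀₁ : T.Adj X₀ X₁) (a₁₂ : T.Adj X₁ X₂) (a₂₃ : T.Adj X₂ X₃)
  (d₀₂ : X₀ ≠ X₂) (d₀₃ : X₀ ≠ X₃) (d₁₃ : X₁ ≠ X₃)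
  (h₀ : v ∈ X₀.1) (h₁ : v ∈ X₁.1) (h₂ : v ∈ X₂.1) (h₃ : v ∈ X₃.1)
include a₀₁ a₁₂ a₂₃ d₀₂ d₀₃ d₁₃ h₀ h₁ h₂ h₃

lemma mem_or_mem_of_mem_second (hu : u ∈ X₁.1) : u ∈ X₀.1 ∨ u ∈ X₃.1 := by
  by_contra! ⟨hu₀, hu₃⟩
  have hac := hT.isTree.isAcyclic
  obtain ⟨a, ha₀, ha₁⟩ := MaxClique.exists_mem_not_mem_of_ne a₀₁.ne
  obtain ⟨c, hc₃, hc₂⟩ := MaxClique.exists_mem_not_mem_of_ne a₂₃.ne'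
  have ha₂ : a ∉ X₂.1 := fun ha₂ =>
    ha₁ (hT.mem_of_between (hac.between_of_adj_of_adj a₀₁.symm a₁₂ d₀₂) ha₀ ha₂)
  have huc : Disjoint (cliquesOf G u) (cliquesOf G c) := by
    by_cases hu₂ : u ∈ X₂.1
    · exact hT.disjoint_cliquesOf_of_adj a₂₃ hu₂ hu₃ hc₃ hc₂
    · exact hT.disjoint_cliquesOf_of_between
        (hac.between_of_adj_of_adj a₁₂.symm a₂₃ d₁₃) hu hu₂ hc₃ hc₂
  exact hcf.false_of_disjoint_cliquesOf (adj_of_mem_of_not_mem h₀ ha₀ h₁ ha₁)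
    (adj_of_mem_of_not_mem h₁ hu h₀ hu₀) (adj_of_mem_of_not_mem h₃ hc₃ h₂ hc₂)
    (hT.disjoint_cliquesOf_of_adj a₀₁ ha₀ ha₁ hu hu₀)
    (hT.disjoint_cliquesOf_of_between
      (hac.between_of_adj_of_adj_of_adj a₀₁ a₁₂ a₂₃ d₀₂ d₀₃ d₁₃) ha₀ ha₂ hc₃ hc₂)
    huc

lemma mem_or_mem_of_mem_third (hu : u ∈ X₂.1) : u ∈ X₀.1 ∨ u ∈ X₃.1 :=
  (hT.mem_or_mem_of_mem_second hcf a₂₃.symm a₁₂.symm a₀₁.symm d₁₃.symm d₀₃.symm d₀₂.symm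
    h₃ h₂ h₁ h₀ hu).symm

section Branch

variable (aC : T.Adj X₂ C) (hC₁ : C ≠ X₁) (hC₃ : C ≠ X₃)
include aC hC₁ hC₃

lemma not_mem_of_mem_first_of_mem_third (hu₀ : u ∈ X₀.1) (hu₂ : u ∈ X₂.1) : u ∉ C.1 := by
  intro huC
  have hac := hT.isTree.isAcyclic
  have hC₀ : C ≠ X₀ := by
    rintro rfl
    exact hac.not_adj_of_adj_of_adj a₀₁.symm a₁₂ d₀₂ aC.symm
  have hu₁ := hT.mem_of_between (hac.between_of_adj_of_adj a₀₁.symm a₁₂ d₀₂) hu₀ hu₂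
  obtain ⟨a, ha₀, ha₁⟩ := MaxClique.exists_mem_not_mem_of_ne a₀₁.ne
  obtain ⟨w, hwC, hw₂⟩ := MaxClique.exists_mem_not_mem_of_ne aC.ne'
  obtain ⟨p, hp₁, hp₀⟩ := MaxClique.exists_mem_not_mem_of_ne a₀₁.ne'
  have hp₃ := (hT.mem_or_mem_of_mem_second hcf a₀₁ a₁₂ a₂₃ d₀₂ d₀₃ d₁₃ h₀ h₁ h₂ h₃
    hp₁).resolve_left hp₀
  have hpC : p ∉ C.1 :=
    hT.not_mem_of_adj_of_adj_of_adj hcf d₁₃ hC₁.symm hC₃.symm a₁₂.symm a₂₃ aC hp₁ hp₃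
  have ha₂ : a ∉ X₂.1 := fun ha₂ =>
    ha₁ (hT.mem_of_between (hac.between_of_adj_of_adj a₀₁.symm a₁₂ d₀₂) ha₀ ha₂)
  have hpw : Disjoint (cliquesOf G p) (cliquesOf G w) := by
    by_cases hp₂ : p ∈ X₂.1
    · exact hT.disjoint_cliquesOf_of_adj aC hp₂ hpC hwC hw₂
    · exact hT.disjoint_cliquesOf_of_between
        (hac.between_of_adj_of_adj a₁₂.symm aC hC₁.symm) hp₁ hp₂ hwC hw₂
  exact hcf.false_of_disjoint_cliquesOf (adj_of_mem_of_not_mem hu₀ ha₀ hu₁ ha₁)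
    (adj_of_mem_of_not_mem hu₁ hp₁ hu₀ hp₀) (adj_of_mem_of_not_mem huC hwC hu₂ hw₂)
    (hT.disjoint_cliquesOf_of_adj a₀₁ ha₀ ha₁ hp₁ hp₀)
    (hT.disjoint_cliquesOf_of_between
      (hac.between_of_adj_of_adj_of_adj a₀₁ a₁₂ aC d₀₂ hC₀.symm hC₁.symm) ha₀ ha₂ hwC hw₂)
    hpw

end Branch

lemma eq_or_eq_of_adj (hconn : G.Connected) (aC : T.Adj X₂ C) :
    C = X₁ ∨ C = X₃ := by
  by_contra! ⟨hC₁, hC₃⟩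
  have hac := hT.isTree.isAcyclic
  have hC : ∀ {u}, u ∈ X₀.1 → u ∈ X₂.1 → u ∉ C.1 :=
    hT.not_mem_of_mem_first_of_mem_third hcf a₀₁ a₁₂ a₂₃ d₀₂ d₀₃ d₁₃ h₀ h₁ h₂ h₃ aC hC₁ hC₃
  have hmem : ∀ {u}, u ∈ X₂.1 → u ∈ X₀.1 ∨ u ∈ X₃.1 :=
    hT.mem_or_mem_of_mem_third hcf a₀₁ a₁₂ a₂₃ d₀₂ d₀₃ d₁₃ h₀ h₁ h₂ h₃
  obtain ⟨u, hu₂, huC⟩ := hT.inter_nonempty_of_adj hconn aC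
  have hu₃ := (hmem hu₂).resolve_left fun hu₀ => hC hu₀ hu₂ huC
  obtain ⟨q, hq₂, hq₃⟩ := MaxClique.exists_mem_not_mem_of_ne a₂₃.ne
  have hqC : q ∉ C.1 := hC ((hmem hq₂).resolve_right hq₃) hq₂
  obtain ⟨w, hwC, hw₂⟩ := MaxClique.exists_mem_not_mem_of_ne aC.ne'
  obtain ⟨c, hc₃, hc₂⟩ := MaxClique.exists_mem_not_mem_of_ne a₂₃.ne'
  exact hcf.false_of_disjoint_cliquesOf (adj_of_mem_of_not_mem huC hwC hu₂ hw₂)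
    (adj_of_mem_of_not_mem hu₃ hc₃ hu₂ hc₂) (adj_of_mem_of_not_mem hu₂ hq₂ hu₃ hq₃)
    (hT.disjoint_cliquesOf_of_between (hac.between_of_adj_of_adj aC a₂₃ hC₃) hwC hw₂ hc₃ hc₂)
    (hT.disjoint_cliquesOf_of_adj aC.symm hwC hw₂ hq₂ hqC)
    (hT.disjoint_cliquesOf_of_adj a₂₃.symm hc₃ hc₂ hq₂ hq₃)

end Path

lemma adj_getVert_eq_or_eq (hconn : G.Connected) {p : T.Walk A B} (hp : p.IsPath)
    (hv : ∀ j, v ∈ (p.getVert j).1) (h₃ : 3 ≤ p.length) :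
    ∀ j, j + 1 < p.length → ∀ C, T.Adj (p.getVert (j + 1)) C →
      C = p.getVert j ∨ C = p.getVert (j + 2) := by
  intro j hj C aC
  have hadj : ∀ i, i < p.length → T.Adj (p.getVert i) (p.getVert (i + 1)) :=
    fun _ => p.adj_getVert_succ
  have hne : ∀ i k, i ≤ p.length → k ≤ p.length → i ≠ k → p.getVert i ≠ p.getVert k :=
    fun i k hi hk hik h => hik (hp.getVert_injOn hi hk h)
  by_cases hj' : j + 3 ≤ p.length
  · exact (hT.eq_or_eq_of_adj hcf (hadj (j + 2) (by omega)).symm (hadj (j + 1) (by omega)).symm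
      (hadj j (by omega)).symm (hne _ _ (by omega) (by omega) (by omega))
      (hne _ _ (by omega) (by omega) (by omega)) (hne _ _ (by omega) (by omega) (by omega))
      (hv _) (hv _) (hv _) (hv _) hconn aC).symm
  · obtain ⟨k, rfl⟩ : ∃ k, j = k + 1 := ⟨j - 1, by omega⟩
    exact hT.eq_or_eq_of_adj hcf (hadj k (by omega)) (hadj (k + 1) (by omega))
      (hadj (k + 2) (by omega)) (hne _ _ (by omega) (by omega) (by omega))
      (hne _ _ (by omega) (by omega) (by omega)) (hne _ _ (by omega) (by omega) (by omega))
      (hv _) (hv _) (hv _) (hv _) hconn aC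

lemma exists_adj_between_of_not_between (hconn : G.Connected) (hR : IsLeaf T R)
    (hAB : ¬ T.Between R B A) (hBA : ¬ T.Between R A B) (hvA : v ∈ A.1) (hvB : v ∈ B.1) :
    ∃ P, T.Adj P A ∧ T.Adj P B ∧ T.Between R P A ∧ T.Between R P B := by
  have htree := hT.isTree
  obtain ⟨p, hp⟩ := (htree.connected A B).exists_isPath
  have hbetw : ∀ j, T.Between A (p.getVert j) B :=
    fun j => htree.isAcyclic.between_of_mem_support hp (p.getVert_mem_support j)
  have hlen : p.length ≠ 0 := fun h => hAB (by
    rw [Walk.eq_of_length_eq_zero h]; exact between_right R B)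
  have hA₁ : T.Adj A (p.getVert 1) := by simpa using p.adj_getVert_succ (i := 0) (by omega)
  have hup := htree.between_of_adj_of_between hA₁ (hbetw 1) hBA
  by_cases h₃ : 3 ≤ p.length
  · exact absurd (htree.between_of_isPath hR hp (hT.adj_getVert_eq_or_eq hcf hconn hp
      (fun j => hT.mem_of_between (hbetw j) hvA hvB) h₃) hup) hAB
  have h₂ : p.length = 2 := by
    by_contra h₂
    exact hAB (by rwa [show 1 = p.length by omega, Walk.getVert_length] at hup)
  have h₁B : T.Adj (p.getVert 1) B := by
    simpa [← h₂, Walk.getVert_length] using p.adj_getVert_succ (i := 1) (by omega)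
  refine ⟨p.getVert 1, hA₁.symm, h₁B, hup, ?_⟩
  exact (htree.between_or_between_of_adj h₁B R).resolve_right fun h => hAB (h.trans hup)

section Center

variable (hAB : A ≠ B) (aA : T.Adj P A) (aB : T.Adj P B) (hvA : v ∈ A.1) (hvB : v ∈ B.1)
include hAB aA aB hvA hvB

lemma mem_or_mem_of_adj_of_adj (hu : u ∈ P.1) : u ∈ A.1 ∨ u ∈ B.1 := by
  by_contra! ⟨huA, huB⟩
  have hPAB := hT.isTree.isAcyclic.between_of_adj_of_adj aA aB hAB
  have hvP := hT.mem_of_between hPAB hvA hvB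
  obtain ⟨a, haA, haP⟩ := MaxClique.exists_mem_not_mem_of_ne aA.ne'
  obtain ⟨b, hbB, hbP⟩ := MaxClique.exists_mem_not_mem_of_ne aB.ne'
  exact hcf.false_of_disjoint_cliquesOf (adj_of_mem_of_not_mem hvA haA hvP haP)
    (adj_of_mem_of_not_mem hvB hbB hvP hbP) (adj_of_mem_of_not_mem hvP hu hvA huA)
    (hT.disjoint_cliquesOf_of_between hPAB haA haP hbB hbP)
    (hT.disjoint_cliquesOf_of_adj aA.symm haA haP hu huA)
    (hT.disjoint_cliquesOf_of_adj aB.symm hbB hbP hu huB)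

lemma inter_nonempty_of_adj_of_adj_of_adj (hconn : G.Connected) (aZ : T.Adj P Z)
    (hZA : Z ≠ A) : (Z.1 ∩ B.1).Nonempty := by
  by_contra hZB'
  have hmem : ∀ {u}, u ∈ P.1 → u ∈ A.1 ∨ u ∈ B.1 :=
    hT.mem_or_mem_of_adj_of_adj hcf hAB aA aB hvA hvB
  obtain ⟨u, huP, huZ⟩ := hT.inter_nonempty_of_adj hconn aZ
  have huA : u ∈ A.1 := (hmem huP).resolve_right fun huB => hZB' ⟨u, huZ, huB⟩
  obtain ⟨t, htP, htA⟩ := MaxClique.exists_mem_not_mem_of_ne aA.ne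
  have htZ : t ∉ Z.1 := fun htZ => hZB' ⟨t, htZ, (hmem htP).resolve_left htA⟩
  obtain ⟨a, haA, haP⟩ := MaxClique.exists_mem_not_mem_of_ne aA.ne'
  obtain ⟨z, hzZ, hzP⟩ := MaxClique.exists_mem_not_mem_of_ne aZ.ne'
  exact hcf.false_of_disjoint_cliquesOf (adj_of_mem_of_not_mem huA haA huP haP)
    (adj_of_mem_of_not_mem huZ hzZ huP hzP) (adj_of_mem_of_not_mem huP htP huA htA)
    (hT.disjoint_cliquesOf_of_between
      (hT.isTree.isAcyclic.between_of_adj_of_adj aA aZ hZA.symm) haA haP hzZ hzP)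
    (hT.disjoint_cliquesOf_of_adj aA.symm haA haP htP htA)
    (hT.disjoint_cliquesOf_of_adj aZ.symm hzZ hzP htP htZ)

lemma mem_of_mem_of_not_mem_of_adj (hconn : G.Connected) (aZ : T.Adj P Z) (hZA : Z ≠ A)
    (hZB : Z ≠ B) (huP : u ∈ P.1) (huB : u ∉ B.1) : u ∈ Z.1 := by
  by_contra huZ
  have hac := hT.isTree.isAcyclic
  obtain ⟨x, hxZ, hxB⟩ :=
    hT.inter_nonempty_of_adj_of_adj_of_adj hcf hAB aA aB hvA hvB hconn aZ hZA
  have hxP := hT.mem_of_between (hac.between_of_adj_of_adj aZ aB hZB) hxZ hxB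
  obtain ⟨b, hbB, hbP⟩ := MaxClique.exists_mem_not_mem_of_ne aB.ne'
  obtain ⟨z, hzZ, hzP⟩ := MaxClique.exists_mem_not_mem_of_ne aZ.ne'
  exact hcf.false_of_disjoint_cliquesOf (adj_of_mem_of_not_mem hxP huP hxB huB)
    (adj_of_mem_of_not_mem hxB hbB hxP hbP) (adj_of_mem_of_not_mem hxZ hzZ hxP hzP)
    (hT.disjoint_cliquesOf_of_adj aB huP huB hbB hbP)
    (hT.disjoint_cliquesOf_of_adj aZ huP huZ hzZ hzP)
    (hT.disjoint_cliquesOf_of_between (hac.between_of_adj_of_adj aB aZ hZB.symm) hbB hbP hzZ hzP)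

lemma eq_of_adj_of_adj_of_adj_of_adj (hconn : G.Connected) (aZ : T.Adj P Z)
    (aD : T.Adj P D) (hZA : Z ≠ A) (hZB : Z ≠ B) (hDA : D ≠ A) (hDB : D ≠ B) : Z = D := by
  by_contra hZD
  have hac := hT.isTree.isAcyclic
  obtain ⟨x, hxZ, hxA⟩ :=
    hT.inter_nonempty_of_adj_of_adj_of_adj hcf hAB.symm aB aA hvB hvA hconn aZ hZB
  obtain ⟨y, hyD, hyB⟩ :=
    hT.inter_nonempty_of_adj_of_adj_of_adj hcf hAB aA aB hvA hvB hconn aD hDA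
  have hxP := hT.mem_of_between (hac.between_of_adj_of_adj aZ aA hZA) hxZ hxA
  have hyP := hT.mem_of_between (hac.between_of_adj_of_adj aD aB hDB) hyD hyB
  have hyA : y ∉ A.1 := hT.not_mem_of_adj_of_adj_of_adj hcf hDB hDA hAB.symm aD aB aA hyD hyB
  have hyZ : y ∉ Z.1 :=
    hT.not_mem_of_adj_of_adj_of_adj hcf hDB (Ne.symm hZD) hZB.symm aD aB aZ hyD hyB
  obtain ⟨w, hwZ, hwP⟩ := MaxClique.exists_mem_not_mem_of_ne aZ.ne'
  obtain ⟨a, haA, haP⟩ := MaxClique.exists_mem_not_mem_of_ne aA.ne'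
  exact hcf.false_of_disjoint_cliquesOf (adj_of_mem_of_not_mem hxZ hwZ hxP hwP)
    (adj_of_mem_of_not_mem hxP hyP hxA hyA) (adj_of_mem_of_not_mem hxA haA hxP haP)
    (hT.disjoint_cliquesOf_of_adj aZ.symm hwZ hwP hyP hyZ)
    (hT.disjoint_cliquesOf_of_between (hac.between_of_adj_of_adj aZ aA hZA) hwZ hwP haA haP)
    (hT.disjoint_cliquesOf_of_adj aA hyP hyA haA haP)

end Center

lemma cliquesOf_eq_of_mem_of_mem (hconn : G.Connected) (hXY : X ≠ Y) (hXW : X ≠ W) (hYW : Y ≠ W)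
    (aX : T.Adj P X) (aY : T.Adj P Y) (aW : T.Adj P W) (huX : u ∈ X.1) (huY : u ∈ Y.1) :
    cliquesOf G u = {P, X, Y} := by
  have hac := hT.isTree.isAcyclic
  have huP := hT.mem_of_between (hac.between_of_adj_of_adj aX aY hXY) huX huY
  have hnb : ∀ N, T.Adj P N → u ∈ N.1 → N = X ∨ N = Y := fun N aN huN => by
    by_contra! ⟨hNX, hNY⟩
    exact hT.not_mem_of_adj_of_adj_of_adj hcf hXY hNX.symm hNY.symm aX aY aN huX huY huN
  -- a clique of `M_u` behind `X` or `Y` would make the third neighbour `W` a branch of `M_u`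
  have hfar : ∀ N N', T.Adj P N → T.Adj P N' → N ≠ N' → W ≠ N → W ≠ N' → u ∈ N.1 →
      u ∈ N'.1 → ∀ E, T.Adj N E → E ≠ P → u ∉ E.1 := by
    intro N N' aN aN' hNN' hWN hWN' huN huN' E aE hEP huE
    have hEN' : E ≠ N' := by
      rintro rfl
      exact hac.not_adj_of_adj_of_adj aN aN' hNN' aE
    rcases hT.eq_or_eq_of_adj hcf aE.symm aN.symm aN' hEP hEN' hNN' huE huN huP huN' hconn aW
      with h | h
    exacts [hWN h, hWN' h]
  ext E
  refine ⟨fun huE => ?_, by rintro (rfl | rfl | rfl) <;> assumption⟩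
  by_contra hE
  simp only [Set.mem_insert_iff, Set.mem_singleton_iff, not_or] at hE
  obtain ⟨p, hp⟩ := (hT.isTree.connected P E).exists_isPath
  cases p with
  | nil => exact hE.1 rfl
  | @cons _ N _ aN p =>
    cases p with
    | nil => exact (hnb _ aN huE).elim hE.2.1 hE.2.2
    | @cons _ E' _ aE q =>
      have hmem : ∀ Z ∈ (Walk.cons aN (.cons aE q)).support, u ∈ Z.1 :=
        fun Z hZ => hT.mem_of_between (hac.between_of_mem_support hp hZ) huP huE
      have hE'P : E' ≠ P := by
        rintro rfl
        simp at hp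
      rcases hnb N aN (hmem N (by simp)) with rfl | rfl
      · exact hfar _ Y aX aY hXY hXW.symm hYW.symm huX huY E' aE hE'P (hmem E' (by simp))
      · exact hfar _ X aY aX hXY.symm hYW.symm hXW.symm huY huX E' aE hE'P (hmem E' (by simp))

lemma cliquesOf_eq_of_adj_of_adj (hconn : G.Connected) (hP : 2 < (T.neighborSet P).ncard)
    (aX : T.Adj P X) (aY : T.Adj P Y) (hXY : X ≠ Y) (huX : u ∈ X.1) (huY : u ∈ Y.1) :
    cliquesOf G u = {P, X, Y} := by
  obtain ⟨W, aW, hW⟩ := Set.exists_mem_notMem_of_ncard_lt_ncard (s := {X, Y})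
    (t := T.neighborSet P) (by rwa [Set.ncard_pair hXY])
  simp only [Set.mem_insert_iff, Set.mem_singleton_iff, not_or] at hW
  exact hT.cliquesOf_eq_of_mem_of_mem hcf hconn hXY (Ne.symm hW.1) (Ne.symm hW.2) aX aY aW huX huY

lemma neighborSet_eq_of_adj (hconn : G.Connected) (hAB : A ≠ B) (hAC : A ≠ C) (hBC : B ≠ C)
    (aA : T.Adj P A) (aB : T.Adj P B) (aC : T.Adj P C) (hvA : v ∈ A.1) (hvB : v ∈ B.1) :
    T.neighborSet P = {A, B, C} := by
  ext Z
  simp only [mem_neighborSet, Set.mem_insert_iff, Set.mem_singleton_iff]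
  refine ⟨fun aZ => ?_, by rintro (rfl | rfl | rfl) <;> assumption⟩
  by_contra! ⟨hZA, hZB, hZC⟩
  exact hZC (hT.eq_of_adj_of_adj_of_adj_of_adj hcf hAB aA aB hvA hvB hconn aZ aC hZA hZB
    hAC.symm hBC.symm)

section Fork

variable (hconn : G.Connected) (hN : T.neighborSet P = {A, B, C}) (hAB : A ≠ B) (hAC : A ≠ C)
  (hBC : B ≠ C) (hvA : v ∈ A.1) (hvB : v ∈ B.1)
include hconn hN hAB hAC hBC hvA hvB

lemma inter_nonempty_of_adj_of_adj (aX : T.Adj P X) (aY : T.Adj P Y) (hXY : X ≠ Y) :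
    (X.1 ∩ Y.1).Nonempty := by
  have aA : T.Adj P A := by simp [← mem_neighborSet, hN]
  have aB : T.Adj P B := by simp [← mem_neighborSet, hN]
  have aC : T.Adj P C := by simp [← mem_neighborSet, hN]
  obtain ⟨x, hxC, hxA⟩ :=
    hT.inter_nonempty_of_adj_of_adj_of_adj hcf hAB.symm aB aA hvB hvA hconn aC hBC.symm
  obtain ⟨y, hyC, hyB⟩ :=
    hT.inter_nonempty_of_adj_of_adj_of_adj hcf hAB aA aB hvA hvB hconn aC hAC.symm
  have hX : X ∈ T.neighborSet P := aX
  have hY : Y ∈ T.neighborSet P := aY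
  simp only [hN, Set.mem_insert_iff, Set.mem_singleton_iff] at hX hY
  rcases hX with rfl | rfl | rfl <;> rcases hY with rfl | rfl | rfl
  all_goals first
    | exact absurd rfl hXY
    | exact ⟨v, ‹_›, ‹_›⟩
    | exact ⟨x, ‹_›, ‹_›⟩
    | exact ⟨y, ‹_›, ‹_›⟩

lemma isForkClique_of_neighborSet_eq : IsForkClique G T P := by
  have aA : T.Adj P A := by simp [← mem_neighborSet, hN]
  have aB : T.Adj P B := by simp [← mem_neighborSet, hN]
  have aC : T.Adj P C := by simp [← mem_neighborSet, hN]
  have hP : (T.neighborSet P).ncard = 3 := by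
    rw [hN]; exact Set.ncard_eq_three.2 ⟨A, B, C, hAB, hAC, hBC, rfl⟩
  have hcliques : ∀ {u X Y}, T.Adj P X → T.Adj P Y → X ≠ Y → u ∈ X.1 → u ∈ Y.1 →
      cliquesOf G u = {P, X, Y} :=
    hT.cliquesOf_eq_of_adj_of_adj hcf hconn (by omega)
  refine ⟨hP, fun u hu => ?_, fun X Y aX aY hXY => ?_⟩
  · by_cases huA : u ∈ A.1 <;> by_cases huB : u ∈ B.1
    · exact ⟨A, B, hAB, aA, aB, hcliques aA aB hAB huA huB⟩
    · have huC := hT.mem_of_mem_of_not_mem_of_adj hcf hAB aA aB hvA hvB hconn aC hAC.symm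
        hBC.symm hu huB
      exact ⟨A, C, hAC, aA, aC, hcliques aA aC hAC huA huC⟩
    · have huC := hT.mem_of_mem_of_not_mem_of_adj hcf hAB.symm aB aA hvB hvA hconn aC
        hBC.symm hAC.symm hu huA
      exact ⟨B, C, hBC, aB, aC, hcliques aB aC hBC huB huC⟩
    · exact ((hT.mem_or_mem_of_adj_of_adj hcf hAB aA aB hvA hvB hu).elim huA huB).elim
  · obtain ⟨u, huX, huY⟩ :=
      hT.inter_nonempty_of_adj_of_adj hcf hconn hN hAB hAC hBC hvA hvB aX aY hXY
    exact ⟨u, hcliques aX aY hXY huX huY⟩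

end Fork

end ClawFree

end IsCliqueTree

theorem intersecting_incomparable_children_of_fork_general {V : Type*}
    (G : SimpleGraph V) (hconn : G.Connected)
    (hcf : ClawFree G) (T : SimpleGraph (MaxClique G)) (hT : IsCliqueTree G T)
    (R : MaxClique G) (hR : IsLeaf T R) (A B : MaxClique G)
    (hAB : ¬ IsAncestor T R A B) (hBA : ¬ IsAncestor T R B A)
    (hint : (A.1 ∩ B.1).Nonempty) :
    ∃ P : MaxClique G, IsChildOf T R A P ∧ IsChildOf T R B P ∧
      IsForkClique G T P := by
  obtain ⟨v, hvA, hvB⟩ := hint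
  simp only [IsChildOf, SimpleGraph.isAncestor_iff_between] at hAB hBA ⊢
  obtain ⟨P, aA, aB, hPA, hPB⟩ :=
    hT.exists_adj_between_of_not_between hcf hconn hR hAB hBA hvA hvB
  have hAB' : A ≠ B := by
    rintro rfl
    exact hAB (SimpleGraph.between_right R A)
  obtain ⟨Q, aQ, hQP⟩ := hT.isTree.exists_adj_between (hR.ne_of_adj_of_adj aA aB hAB')
  have hAQ : A ≠ Q := by
    rintro rfl
    exact aA.ne (hT.isTree.eq_of_between_of_between hPA hQP)
  have hBQ : B ≠ Q := by
    rintro rfl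
    exact aB.ne (hT.isTree.eq_of_between_of_between hPB hQP)
  have hN := hT.neighborSet_eq_of_adj hcf hconn hAB' hAQ hBQ aA aB aQ.symm hvA hvB
  exact ⟨P, ⟨aA, hPA⟩, ⟨aB, hPB⟩,
    hT.isForkClique_of_neighborSet_eq hcf hconn hN hAB' hAQ hBQ hvA hvB⟩

/-- Let `G` be a connected chordal claw-free graph with clique
tree `T` rooted at a leaf `R`.  Let `A` and `B` be max cliques such that `A` is
not a descendant of `B` and `B` is not a descendant of `A` in the rooted tree.
If `A ∩ B ≠ ∅`, then `A` and `B` are the two children of a fork clique: they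
have a common parent `P` which is a fork clique. -/
theorem intersecting_incomparable_children_of_fork {V : Type*} [Fintype V]
    [Nonempty V] (G : SimpleGraph V) (hconn : G.Connected) (hch : IsChordal G)
    (hcf : ClawFree G) (T : SimpleGraph (MaxClique G)) (hT : IsCliqueTree G T)
    (R : MaxClique G) (hR : IsLeaf T R) (A B : MaxClique G)
    (hAB : ¬ IsAncestor T R A B) (hBA : ¬ IsAncestor T R B A)
    (hint : (A.1 ∩ B.1).Nonempty) :
    ∃ P : MaxClique G, IsChildOf T R A P ∧ IsChildOf T R B P ∧
      IsForkClique G T P :=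
  intersecting_incomparable_children_of_fork_general G hconn hcf T hT R hR A B hAB hBA hint
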